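/- Let Omega be a properly convex domain in P(R^d). If p1, p2, q1, q2 are points of the closure of Omega such that the open segment (p1,p2) is contained in Omega, F_Omega(p1) = F_Omega(q1), and F_Omega(p2) = F_Omega(q2), then the Hausdorff distance with respect to the Hilbert metric between [p1,p2] ∩ Omega and [q1,q2] ∩ Omega is at most max{ d_{F_Omega(p1)}(p1,q1), d_{F_Omega(p2)}(p2,q2) }. -/

import Mathlib

/-!
Birkhoff's description of the Hilbert metric drives the proof. In the cone over `Ω`, write
`x ≤ l y` when `l y - x` lies in its closure. If `x ≤ l y` and `y ≤ m x`, the chord through `x`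
and `y` meets the boundary at parameters determined by `l` and `m`, so `d_Ω(x, y) ≤ ½ log (l m)`;
conversely, for `q` in the open face of `p` there are such comparisons between `p` and `q` with
`½ log (l m)` as close to `d_F(p, q)` as we like, because the chord through `p` and `q` extends
beyond both points inside the face.

Given comparisons with constants `lᵢ, mᵢ` between `pᵢ` and `qᵢ`, rescaling the representative of
`qᵢ` by `lᵢ / √(lᵢ mᵢ)` makes both constants equal to `√(lᵢ mᵢ)`, and both may then be
enlarged to `s = max √(lᵢ mᵢ)`. Comparisons with a common constant survive convex combinations, so every
point of `[p₁, p₂]` is comparable, with constant `s` both ways, to a point of `[q₁, q₂]`; that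
point lies in `Ω` because the cone over `Ω` is open, and the two points are at Hilbert distance
at most `log s`.
-/

open Set Filter Topology

noncomputable section

/-- The vector space `ℝ^d`. -/
abbrev Vd (d : ℕ) := Fin d → ℝ

/-- Real projective space `P(ℝ^d)`. -/
abbrev Proj (d : ℕ) := Projectivization ℝ (Vd d)

instance (d : ℕ) : TopologicalSpace (Proj d) :=
  instTopologicalSpaceQuotient (s := projectivizationSetoid ℝ (Vd d))

variable {d : ℕ}

/-- The affine chart associated to a nonzero linear functional `f`: a point `[v]` with
`f v ≠ 0` is sent to the representative `v / f v` in the affine hyperplane `{w : f w = 1}`. -/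
def pchart (f : Vd d →ₗ[ℝ] ℝ) (x : Proj d) : Vd d := (f x.rep)⁻¹ • x.rep

/-- `C ⊆ P(ℝ^d)` is properly convex, realized in the affine chart determined by `f`:
its closure lies in the chart, and its image there is a bounded convex set. -/
structure IsPC (f : Vd d →ₗ[ℝ] ℝ) (C : Set (Proj d)) : Prop where
  chartOK : ∀ x ∈ closure C, f (Projectivization.rep x) ≠ 0
  bounded : Bornology.IsBounded (pchart f '' C)
  convex : Convex ℝ (pchart f '' C)

/-- A properly convex domain: a nonempty open properly convex subset of `P(ℝ^d)`. -/
structure IsPCDomain (f : Vd d →ₗ[ℝ] ℝ) (Ω : Set (Proj d)) : Prop where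
  pc : IsPC f Ω
  isOpen : IsOpen Ω
  nonempty : Ω.Nonempty

/-- The open projective segment `(x,y)`, computed in the affine chart of `f`. -/
def poseg (f : Vd d →ₗ[ℝ] ℝ) (x y : Proj d) : Set (Proj d) :=
  {z | ∃ w ∈ openSegment ℝ (pchart f x) (pchart f y), ∃ hw : w ≠ 0, z = Projectivization.mk ℝ w hw}

/-- The closed projective segment `[x,y]`, computed in the affine chart of `f`. -/
def pcseg (f : Vd d →ₗ[ℝ] ℝ) (x y : Proj d) : Set (Proj d) :=
  {z | ∃ w ∈ segment ℝ (pchart f x) (pchart f y), ∃ hw : w ≠ 0, z = Projectivization.mk ℝ w hw}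

/-- Parameters `t` for which `x + t(y - x)` lies in the closure of `K`. -/
def segSet (K : Set (Vd d)) (x y : Vd d) : Set ℝ := {t : ℝ | x + t • (y - x) ∈ closure K}

/-- Hilbert distance on a bounded convex set `K` in an affine chart, via the cross ratio:
with `s = sSup`, `r = sInf` of the parameter set (so the boundary points are
`a = x + r(y-x)`, `b = x + s(y-x)`, ordered `a,x,y,b`), this is
`(1/2) log ( s(1-r) / ((s-1)(-r)) ) = (1/2) log (|x-b||y-a| / (|x-a||y-b|))`. -/
def affHilbertDist (K : Set (Vd d)) (x y : Vd d) : ℝ :=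
  if x = y then 0 else
    (1/2) * Real.log ((sSup (segSet K x y) * (1 - sInf (segSet K x y))) /
      ((sSup (segSet K x y) - 1) * (- sInf (segSet K x y))))

/-- The Hilbert metric of a properly convex set `Ω`, in the chart of `f`. -/
def hdist (f : Vd d →ₗ[ℝ] ℝ) (Ω : Set (Proj d)) (x y : Proj d) : ℝ :=
  affHilbertDist (pchart f '' Ω) (pchart f x) (pchart f y)

/-- The open face of a point `x` of the closure of an affine convex set `K`:
`x` together with all `y` in the closure such that some open segment contained in the closure
contains both `x` and `y`. -/
def affFace (K : Set (Vd d)) (x : Vd d) : Set (Vd d) :=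
  insert x {y ∈ closure K | ∃ a b : Vd d, openSegment ℝ a b ⊆ closure K ∧
      x ∈ openSegment ℝ a b ∧ y ∈ openSegment ℝ a b}

/-- The open face `F_C(x)` of a point `x ∈ closure C`, for `C` properly convex in the chart of `f`. -/
def pface (f : Vd d →ₗ[ℝ] ℝ) (C : Set (Proj d)) (x : Proj d) : Set (Proj d) :=
  insert x {y ∈ closure C | pchart f y ∈ affFace (pchart f '' C) (pchart f x)}

/-- `F_C(A) = ⋃_{x ∈ A} F_C(x)`. -/
def pfaceSet (f : Vd d →ₗ[ℝ] ℝ) (C : Set (Proj d)) (A : Set (Proj d)) : Set (Proj d) :=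
  ⋃ x ∈ A, pface f C x

/-- The Hilbert metric of the open face `F_C(x)` (a properly convex set open in its span). -/
def pfaceDist (f : Vd d →ₗ[ℝ] ℝ) (C : Set (Proj d)) (x : Proj d) (p q : Proj d) : ℝ :=
  affHilbertDist (pchart f '' pface f C x) (pchart f p) (pchart f q)

/-- The ideal boundary `∂ᵢ C = closure C ∩ ∂Ω` of a subset `C` of a domain `Ω`. -/
def idealBdry (Ω C : Set (Proj d)) : Set (Proj d) := closure C ∩ frontier Ω

/-- Linear automorphisms of `ℝ^d` (inducing projective transformations). -/
abbrev GLd (d : ℕ) := (Vd d) ≃ₗ[ℝ] (Vd d)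

/-- The projective action of a linear automorphism. -/
def pact (g : GLd d) (x : Proj d) : Proj d := Projectivization.map g.toLinearMap g.injective x

/-- Orbit of a point under a set of linear automorphisms. -/
def orbitOf (S : Set (GLd d)) (p : Proj d) : Set (Proj d) := {q | ∃ γ ∈ S, q = pact γ p}

/-- The limit set of a set of automorphisms of `Ω`: all boundary accumulation points of orbits. -/
def limitSetOf (Ω : Set (Proj d)) (S : Set (GLd d)) : Set (Proj d) :=
  frontier Ω ∩ ⋃ p ∈ Ω, closure (orbitOf S p)

/-- The limit set of a subgroup. -/
def limitSet (Ω : Set (Proj d)) (Γ : Subgroup (GLd d)) : Set (Proj d) :=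
  limitSetOf Ω {γ : GLd d | γ ∈ Γ}

/-- Open `r`-neighborhood of `A` in `(Ω, hdist)`. -/
def hnbhd (f : Vd d →ₗ[ℝ] ℝ) (Ω A : Set (Proj d)) (r : ℝ) : Set (Proj d) :=
  {x ∈ Ω | ∃ a ∈ A, hdist f Ω x a < r}

/-- Open metric ball in `(Ω, hdist)`. -/
def hball (f : Vd d →ₗ[ℝ] ℝ) (Ω : Set (Proj d)) (x₀ : Proj d) (r : ℝ) : Set (Proj d) :=
  {y ∈ Ω | hdist f Ω x₀ y < r}

/-- The Hilbert-metric diameter of `A` is at most `D`. -/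
def DiamLE (f : Vd d →ₗ[ℝ] ℝ) (Ω A : Set (Proj d)) (D : ℝ) : Prop :=
  ∀ x ∈ A, ∀ y ∈ A, hdist f Ω x y ≤ D

/-- `X` is unbounded in `(Ω, hdist)`. -/
def HUnbounded (f : Vd d →ₗ[ℝ] ℝ) (Ω X : Set (Proj d)) : Prop := ¬ ∃ D : ℝ, DiamLE f Ω X D

/-- A strongly isolated collection: intersections of `r`-neighborhoods of distinct
members have uniformly bounded diameter. -/
def StronglyIsolated (f : Vd d →ₗ[ℝ] ℝ) (Ω : Set (Proj d)) (𝒳 : Set (Set (Proj d))) : Prop :=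
  ∀ r > (0:ℝ), ∃ D > (0:ℝ), ∀ X₁ ∈ 𝒳, ∀ X₂ ∈ 𝒳, X₁ ≠ X₂ →
    DiamLE f Ω (hnbhd f Ω X₁ r ∩ hnbhd f Ω X₂ r) D

/-- A `Γ`-invariant collection of sets. -/
def GInvariant (Γ : Subgroup (GLd d)) (𝒳 : Set (Set (Proj d))) : Prop :=
  ∀ γ ∈ Γ, ∀ X ∈ 𝒳, pact γ '' X ∈ 𝒳

/-- A naive convex co-compact triple `(Ω, C, Γ)`. -/
structure IsNCC (f : Vd d →ₗ[ℝ] ℝ) (Ω C : Set (Proj d)) (Γ : Subgroup (GLd d)) : Prop where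
  dom : IsPCDomain f Ω
  subset : C ⊆ Ω
  nonempty : C.Nonempty
  closedIn : closure C ∩ Ω ⊆ C
  convex : Convex ℝ (pchart f '' C)
  invΩ : ∀ γ ∈ Γ, pact γ '' Ω = Ω
  invC : ∀ γ ∈ Γ, pact γ '' C = C
  discrete : ∀ K : Set (Proj d), K ⊆ Ω → IsCompact K →
      {γ : GLd d | γ ∈ Γ ∧ (pact γ '' K ∩ K).Nonempty}.Finite
  cocompact : ∃ K : Set (Proj d), K ⊆ C ∧ IsCompact K ∧ ∀ x ∈ C, ∃ γ ∈ Γ, pact γ x ∈ K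

/-- `𝒳` is a collection of closed unbounded convex subsets of `C`. -/
structure IsCUC (f : Vd d →ₗ[ℝ] ℝ) (Ω C : Set (Proj d)) (𝒳 : Set (Set (Proj d))) : Prop where
  sub : ∀ X ∈ 𝒳, X ⊆ C
  closedIn : ∀ X ∈ 𝒳, closure X ∩ Ω ⊆ X
  unbdd : ∀ X ∈ 𝒳, HUnbounded f Ω X
  convex : ∀ X ∈ 𝒳, Convex ℝ (pchart f '' X)

/-- The standard `k`-dimensional projective simplex, with vertices `e_0, …, e_k`. -/
def stdSimplexP (d k : ℕ) : Set (Proj d) :=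
  {x : Proj d | ∃ (c : Vd d) (hc : c ≠ 0), (∀ i : Fin d, (i : ℕ) ≤ k → 0 < c i) ∧
      (∀ i : Fin d, k < (i : ℕ) → c i = 0) ∧ x = Projectivization.mk ℝ c hc}

/-- `S` is a `k`-dimensional projective simplex. -/
def IsSimplex (k : ℕ) (S : Set (Proj d)) : Prop :=
  ∃ g : GLd d, pact g '' stdSimplexP d k = S

/-- `S` is properly embedded in `C` (the inclusion is a proper map). -/
def ProperlyEmbedded (C S : Set (Proj d)) : Prop := S ⊆ C ∧ closure S ∩ C ⊆ S

/-- `𝒳` coarsely contains the properly embedded simplices of `C` of dimension at least two. -/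
def CoarselyContainsSimplices (f : Vd d →ₗ[ℝ] ℝ) (Ω C : Set (Proj d))
    (𝒳 : Set (Set (Proj d))) : Prop :=
  ∃ D > (0:ℝ), ∀ k : ℕ, 2 ≤ k → ∀ S : Set (Proj d), IsSimplex k S → ProperlyEmbedded C S →
    ∃ X ∈ 𝒳, S ⊆ hnbhd f Ω X D

/-- A peripheral family of the naive convex co-compact triple `(Ω, C, Γ)`. -/
def IsPeripheralFamily (f : Vd d →ₗ[ℝ] ℝ) (Ω C : Set (Proj d)) (Γ : Subgroup (GLd d))
    (𝒳 : Set (Set (Proj d))) : Prop :=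
  GInvariant Γ 𝒳 ∧ StronglyIsolated f Ω 𝒳 ∧ CoarselyContainsSimplices f Ω C 𝒳

/-- `Hausdorff distance between A and B (w.r.t. the distance function ρ) is at most M`. -/
def HausdorffLE {α : Type*} (ρ : α → α → ℝ) (A B : Set α) (M : ℝ) : Prop :=
  (∀ a ∈ A, ∀ ε > (0:ℝ), ∃ b ∈ B, ρ a b < M + ε) ∧
  (∀ b ∈ B, ∀ ε > (0:ℝ), ∃ a ∈ A, ρ a b < M + ε)

/-- The closed convex hull of `A ⊆ closure Ω` taken inside `closure Ω`, in the chart of `f`. -/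
def projConvHull (f : Vd d →ₗ[ℝ] ℝ) (Ω A : Set (Proj d)) : Set (Proj d) :=
  {z ∈ closure Ω | pchart f z ∈ closure (convexHull ℝ (pchart f '' A))}

/-- The convex core of `Γ`: the closed convex hull of the limit set, intersected with `Ω`. -/
def pcore (f : Vd d →ₗ[ℝ] ℝ) (Ω : Set (Proj d)) (Γ : Subgroup (GLd d)) : Set (Proj d) :=
  projConvHull f Ω (limitSet Ω Γ) ∩ Ω

/-- `Γ` is a convex co-compact subgroup of `Aut(Ω)`. -/
structure IsCCSubgroup (f : Vd d →ₗ[ℝ] ℝ) (Ω : Set (Proj d)) (Γ : Subgroup (GLd d)) : Prop where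
  dom : IsPCDomain f Ω
  invΩ : ∀ γ ∈ Γ, pact γ '' Ω = Ω
  discrete : ∀ K : Set (Proj d), K ⊆ Ω → IsCompact K →
      {γ : GLd d | γ ∈ Γ ∧ (pact γ '' K ∩ K).Nonempty}.Finite
  coreNonempty : (pcore f Ω Γ).Nonempty
  cocompact : ∃ K : Set (Proj d), K ⊆ pcore f Ω Γ ∧ IsCompact K ∧
      ∀ x ∈ pcore f Ω Γ, ∃ γ ∈ Γ, pact γ x ∈ K


namespace PointedCone

variable {E : Type*} [AddCommGroup E] [Module ℝ E] (K : PointedCone ℝ E)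

lemma smul_sub_mem_of_sqrt_mul_le {x y : E} {l m s : ℝ} (hl : 0 < l) (hm : 0 < m)
    (hx : x ∈ K) (hy : y ∈ K) (h : l • y - x ∈ K) (h' : m • x - y ∈ K)
    (hs : √(l * m) ≤ s) :
    s • ((l / √(l * m)) • y) - x ∈ K ∧ s • x - (l / √(l * m)) • y ∈ K := by
  set σ := √(l * m)
  have hσ : 0 < σ := Real.sqrt_pos.2 (mul_pos hl hm)
  have hσc : σ * (l / σ) = l := mul_div_cancel₀ l hσ.ne'
  have hcm : l / σ * m = σ := by
    rw [div_mul_eq_mul_div, div_eq_iff hσ.ne', ← sq, Real.sq_sqrt (mul_pos hl hm).le]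
  have hc : 0 ≤ l / σ := (div_pos hl hσ).le
  have hsσ : 0 ≤ s - σ := sub_nonneg.2 hs
  constructor
  · convert K.add_mem (K.smul_mem hsσ (K.smul_mem hc hy)) h using 1
    linear_combination (norm := module) hσc • y
  · convert K.add_mem (K.smul_mem hsσ hx) (K.smul_mem hc h') using 1
    linear_combination (norm := module) -hcm • x

lemma smul_sub_mem_combo {x₁ x₂ y₁ y₂ : E} {s a b : ℝ} (ha : 0 ≤ a) (hb : 0 ≤ b)
    (h₁ : s • y₁ - x₁ ∈ K) (h₂ : s • y₂ - x₂ ∈ K) :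
    s • (a • y₁ + b • y₂) - (a • x₁ + b • x₂) ∈ K := by
  convert K.add_mem (K.smul_mem ha h₁) (K.smul_mem hb h₂) using 1
  module

theorem exists_mem_segment_smul_sub_mem {x₁ x₂ y₁ y₂ x : E} {l₁ m₁ l₂ m₂ : ℝ}
    (hl₁ : 0 < l₁) (hm₁ : 0 < m₁) (hl₂ : 0 < l₂) (hm₂ : 0 < m₂)
    (hx₁ : x₁ ∈ K) (hx₂ : x₂ ∈ K) (hy₁ : y₁ ∈ K) (hy₂ : y₂ ∈ K)
    (h₁ : l₁ • y₁ - x₁ ∈ K) (h₁' : m₁ • x₁ - y₁ ∈ K)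
    (h₂ : l₂ • y₂ - x₂ ∈ K) (h₂' : m₂ • x₂ - y₂ ∈ K) (hx : x ∈ segment ℝ x₁ x₂) :
    ∃ y ∈ segment ℝ y₁ y₂, ∃ l m : ℝ, l • y - x ∈ K ∧ m • x - y ∈ K ∧
      l * m = max (l₁ * m₁) (l₂ * m₂) := by
  obtain ⟨a, b, ha, hb, hab, rfl⟩ := hx
  set s := √(max (l₁ * m₁) (l₂ * m₂))
  have hs₁ : √(l₁ * m₁) ≤ s := Real.sqrt_le_sqrt (le_max_left _ _)
  have hs₂ : √(l₂ * m₂) ≤ s := Real.sqrt_le_sqrt (le_max_right _ _)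
  have hs : 0 < s := Real.sqrt_pos.2 (lt_max_of_lt_left (mul_pos hl₁ hm₁))
  set c₁ := l₁ / √(l₁ * m₁)
  set c₂ := l₂ / √(l₂ * m₂)
  have hc₁ : 0 < c₁ := div_pos hl₁ (Real.sqrt_pos.2 (mul_pos hl₁ hm₁))
  have hc₂ : 0 < c₂ := div_pos hl₂ (Real.sqrt_pos.2 (mul_pos hl₂ hm₂))
  obtain ⟨k₁, k₁'⟩ := K.smul_sub_mem_of_sqrt_mul_le hl₁ hm₁ hx₁ hy₁ h₁ h₁' hs₁
  obtain ⟨k₂, k₂'⟩ := K.smul_sub_mem_of_sqrt_mul_le hl₂ hm₂ hx₂ hy₂ h₂ h₂' hs₂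
  set F := a * c₁ + b * c₂
  have hF : 0 < F := convex_Ioi (0 : ℝ) hc₁ hc₂ ha hb hab
  refine ⟨F⁻¹ • (a • c₁ • y₁ + b • c₂ • y₂),
    ⟨a * c₁ / F, b * c₂ / F, by positivity, by positivity,
      by rw [← add_div, div_self hF.ne'], by module⟩,
    s * F, s / F, ?_, ?_, ?_⟩
  · convert K.smul_sub_mem_combo ha hb k₁ k₂ using 2
    rw [smul_smul, mul_assoc, mul_inv_cancel₀ hF.ne', mul_one]
  · convert K.smul_mem (inv_nonneg.2 hF.le) (K.smul_sub_mem_combo ha hb k₁' k₂') using 1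
    module
  · calc s * F * (s / F) = s * s := by field_simp
      _ = _ := Real.mul_self_sqrt (le_max_of_le_left (mul_pos hl₁ hm₁).le)

end PointedCone

section CrossRatio

/-- The cross ratio in `affHilbertDist`, in terms of the parameters `s > 1` and `r < 0` of the two
boundary points on the line through `x` and `y`. -/
def crossRatio (s r : ℝ) : ℝ := s * (1 - r) / ((s - 1) * (-r))

lemma crossRatio_eq_mul (s r : ℝ) : crossRatio s r = s / (s - 1) * ((1 - r) / (-r)) :=
  (div_mul_div_comm ..).symm

lemma one_lt_crossRatio {s r : ℝ} (hs : 1 < s) (hr : r < 0) : 1 < crossRatio s r := by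
  rw [crossRatio_eq_mul]
  exact one_lt_mul_of_lt_of_le ((one_lt_div (by linarith)).2 (by linarith))
    ((one_lt_div (by linarith)).2 (by linarith)).le

lemma crossRatio_le_crossRatio {s r s' r' : ℝ} (hs' : 1 < s') (hr' : r' < 0) (hss : s' ≤ s)
    (hrr : r ≤ r') : crossRatio s r ≤ crossRatio s' r' := by
  rw [crossRatio_eq_mul, crossRatio_eq_mul]
  apply mul_le_mul
  · rw [div_le_div_iff₀ (by linarith) (by linarith)]; nlinarith
  · rw [div_le_div_iff₀ (by linarith) (by linarith)]; nlinarith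
  · exact div_nonneg (by linarith) (by linarith)
  · exact div_nonneg (by linarith) (by linarith)

lemma crossRatio_div_sub_one (l m : ℝ) (hl : l ≠ 1) (hm : m ≠ 1) :
    crossRatio (l / (l - 1)) (-1 / (m - 1)) = l * m := by
  rw [crossRatio]
  field_simp [sub_ne_zero.2 hl, sub_ne_zero.2 hm]
  ring

end CrossRatio

section AffHilbertDist

variable {K : Set (Vd d)} {x y : Vd d}

lemma affHilbertDist_of_ne (hxy : x ≠ y) :
    affHilbertDist K x y =
      1 / 2 * Real.log (crossRatio (sSup (segSet K x y)) (sInf (segSet K x y))) :=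
  if_neg hxy

lemma isBounded_segSet (hK : Bornology.IsBounded K) (hxy : x ≠ y) :
    Bornology.IsBounded (segSet K x y) := by
  obtain ⟨R, hR⟩ := isBounded_iff_forall_norm_le.1 hK.closure
  have hyx : 0 < ‖y - x‖ := norm_pos_iff.2 (sub_ne_zero.2 hxy.symm)
  refine isBounded_iff_forall_norm_le.2 ⟨(R + ‖x‖) / ‖y - x‖, fun t ht => ?_⟩
  rw [le_div_iff₀ hyx, Real.norm_eq_abs, ← Real.norm_eq_abs, ← norm_smul]
  calc ‖t • (y - x)‖ = ‖(x + t • (y - x)) - x‖ := by rw [add_sub_cancel_left]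
    _ ≤ ‖x + t • (y - x)‖ + ‖x‖ := norm_sub_le _ _
    _ ≤ R + ‖x‖ := by gcongr; exact hR _ ht

lemma affHilbertDist_le (hK : Bornology.IsBounded K) {s r : ℝ}
    (hs : s ∈ segSet K x y) (hs1 : 1 < s) (hr : r ∈ segSet K x y) (hr0 : r < 0) :
    affHilbertDist K x y ≤ 1 / 2 * Real.log (crossRatio s r) := by
  rcases eq_or_ne x y with rfl | hxy
  · rw [affHilbertDist, if_pos rfl]
    exact mul_nonneg (by norm_num) (Real.log_nonneg (one_lt_crossRatio hs1 hr0).le)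
  have hS := isBounded_segSet hK hxy
  have hsup : s ≤ sSup (segSet K x y) := le_csSup hS.bddAbove hs
  have hinf : sInf (segSet K x y) ≤ r := csInf_le hS.bddBelow hr
  rw [affHilbertDist_of_ne hxy]
  gcongr
  · exact zero_lt_one.trans (one_lt_crossRatio (hs1.trans_le hsup) (hinf.trans_lt hr0))
  · exact crossRatio_le_crossRatio hs1 hr0 hsup hinf

lemma exists_half_log_crossRatio_lt (hK : Bornology.IsBounded K) (hxy : x ≠ y) {s₀ r₀ : ℝ}
    (hs₀ : s₀ ∈ segSet K x y) (hs₀1 : 1 < s₀) (hr₀ : r₀ ∈ segSet K x y) (hr₀0 : r₀ < 0)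
    {D : ℝ} (hD : affHilbertDist K x y < D) :
    ∃ s ∈ segSet K x y, 1 < s ∧ ∃ r ∈ segSet K x y, r < 0 ∧
      1 / 2 * Real.log (crossRatio s r) < D := by
  set S := segSet K x y
  have hS := isBounded_segSet hK hxy
  have hsup : 1 < sSup S := hs₀1.trans_le (le_csSup hS.bddAbove hs₀)
  have hinf : sInf S < 0 := (csInf_le hS.bddBelow hr₀).trans_lt hr₀0
  obtain ⟨u, -, hu, huS⟩ := exists_seq_tendsto_sSup ⟨s₀, hs₀⟩ hS.bddAbove
  obtain ⟨v, -, hv, hvS⟩ := exists_seq_tendsto_sInf ⟨s₀, hs₀⟩ hS.bddBelow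
  have hlim : Tendsto (fun n => 1 / 2 * Real.log (crossRatio (u n) (v n))) atTop
      (𝓝 (affHilbertDist K x y)) := by
    rw [affHilbertDist_of_ne hxy]
    refine ((Tendsto.div (hu.mul (tendsto_const_nhds.sub hv)) ((hu.sub_const 1).mul hv.neg)
      ?_).log ?_).const_mul _
    · exact mul_ne_zero (by linarith) (by linarith)
    · exact (zero_lt_one.trans (one_lt_crossRatio hsup hinf)).ne'
  obtain ⟨n, hn1, hn0, hnD⟩ := ((hu.eventually (lt_mem_nhds hsup)).and
    ((hv.eventually (gt_mem_nhds hinf)).and (hlim.eventually (gt_mem_nhds hD)))).exists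
  exact ⟨u n, huS n, hn1, v n, hvS n, hn0, hnD⟩

end AffHilbertDist

section Chart

lemma isQuotientMap_mk :
    IsQuotientMap fun u : {v : Vd d // v ≠ 0} => (Projectivization.mk ℝ u.1 u.2 : Proj d) :=
  isQuotientMap_quot_mk

variable (f : Vd d →ₗ[ℝ] ℝ)

lemma pchart_mk {v : Vd d} (hv : v ≠ 0) :
    pchart f (Projectivization.mk ℝ v hv) = (f v)⁻¹ • v := by
  obtain ⟨a, ha⟩ := Projectivization.exists_smul_eq_mk_rep ℝ v hv
  rw [pchart, ← ha, Units.smul_def, map_smul, smul_smul, smul_eq_mul, mul_inv,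
    mul_right_comm, inv_mul_cancel₀ a.ne_zero, one_mul]

lemma pchart_mk_of_map_eq_one {v : Vd d} (hv : v ≠ 0) (hfv : f v = 1) :
    pchart f (Projectivization.mk ℝ v hv) = v := by
  rw [pchart_mk f hv, hfv, inv_one, one_smul]

lemma map_pchart {x : Proj d} (hx : f x.rep ≠ 0) : f (pchart f x) = 1 := by
  rw [pchart, map_smul, smul_eq_mul, inv_mul_cancel₀ hx]

lemma mk_pchart {x : Proj d} (hx : f x.rep ≠ 0) :
    Projectivization.mk ℝ (pchart f x) (smul_ne_zero (inv_ne_zero hx) x.rep_nonzero) = x := by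
  conv_rhs => rw [← x.mk_rep]
  exact (Projectivization.mk_eq_mk_iff' ℝ _ _ _ _).2 ⟨(f x.rep)⁻¹, rfl⟩

lemma map_rep_mk_ne_zero_iff {v : Vd d} (hv : v ≠ 0) :
    f (Projectivization.mk ℝ v hv).rep ≠ 0 ↔ f v ≠ 0 := by
  obtain ⟨a, ha⟩ := Projectivization.exists_smul_eq_mk_rep ℝ v hv
  rw [← ha, Units.smul_def, map_smul, smul_eq_mul, mul_ne_zero_iff, and_iff_right a.ne_zero]

lemma isOpen_setOf_map_rep_ne_zero : IsOpen {x : Proj d | f x.rep ≠ 0} := by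
  rw [← isQuotientMap_mk.isOpen_preimage]
  convert (isOpen_ne_fun (f.continuous_of_finiteDimensional.comp continuous_subtype_val)
    continuous_const : IsOpen {u : {v : Vd d // v ≠ 0} | f u ≠ 0}) using 1
  ext u
  exact map_rep_mk_ne_zero_iff f u.2

lemma continuousOn_pchart : ContinuousOn (pchart f) {x : Proj d | f x.rep ≠ 0} := by
  rw [continuousOn_open_iff (isOpen_setOf_map_rep_ne_zero f)]
  intro V hV
  rw [← isQuotientMap_mk.isOpen_preimage]
  have hcont : ContinuousOn (fun u : {v : Vd d // v ≠ 0} => (f u)⁻¹ • (u : Vd d))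
      {u | f u ≠ 0} :=
    ((f.continuous_of_finiteDimensional.comp continuous_subtype_val).continuousOn.inv₀
      fun _ hu => hu).smul continuous_subtype_val.continuousOn
  convert hcont.isOpen_inter_preimage (isOpen_ne_fun
    (f.continuous_of_finiteDimensional.comp continuous_subtype_val) continuous_const) hV using 1
  ext u
  change f (Projectivization.mk ℝ u.1 u.2).rep ≠ 0 ∧ pchart f (Projectivization.mk ℝ u.1 u.2) ∈ V
    ↔ f u ≠ 0 ∧ (f u)⁻¹ • (u : Vd d) ∈ V
  rw [map_rep_mk_ne_zero_iff f u.2, pchart_mk f u.2]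

lemma pchart_mem_closure_image {S : Set (Proj d)} {x : Proj d} (hx : x ∈ closure S)
    (hfx : f x.rep ≠ 0) : pchart f x ∈ closure (pchart f '' S) :=
  mem_closure_image ((continuousOn_pchart f).continuousAt
    ((isOpen_setOf_map_rep_ne_zero f).mem_nhds hfx)) hx

end Chart

section Cone

variable {f : Vd d →ₗ[ℝ] ℝ} {Ω : Set (Proj d)}

variable (f Ω) in
def pcone : Set (Vd d) := {v | ∃ h : v ≠ 0, 0 < f v ∧ Projectivization.mk ℝ v h ∈ Ω}

lemma mem_pcone_iff (hΩ : IsPCDomain f Ω) {v : Vd d} :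
    v ∈ pcone f Ω ↔ 0 < f v ∧ (f v)⁻¹ • v ∈ pchart f '' Ω := by
  constructor
  · rintro ⟨hv, hfv, hvΩ⟩
    exact ⟨hfv, _, hvΩ, pchart_mk f hv⟩
  · rintro ⟨hfv, x, hxΩ, hx⟩
    have hv : v ≠ 0 := ne_zero_of_map hfv.ne'
    refine ⟨hv, hfv, ?_⟩
    convert hxΩ
    rw [← mk_pchart f (hΩ.pc.chartOK x (subset_closure hxΩ))]
    exact (Projectivization.mk_eq_mk_iff' ℝ _ _ _ _).2 ⟨f v, by rw [hx, smul_inv_smul₀ hfv.ne']⟩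

lemma pchart_image_subset_pcone (hΩ : IsPCDomain f Ω) : pchart f '' Ω ⊆ pcone f Ω := by
  rintro _ ⟨x, hx, rfl⟩
  have hfx := map_pchart f (hΩ.pc.chartOK x (subset_closure hx))
  rw [mem_pcone_iff hΩ, hfx, inv_one, one_smul]
  exact ⟨one_pos, x, hx, rfl⟩

lemma pcone_nonempty (hΩ : IsPCDomain f Ω) : (pcone f Ω).Nonempty :=
  hΩ.nonempty.image (pchart f) |>.mono (pchart_image_subset_pcone hΩ)

lemma isOpen_pcone (hΩ : IsPCDomain f Ω) : IsOpen (pcone f Ω) := by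
  have hmk : IsOpen {v : Vd d | ∃ h : v ≠ 0, Projectivization.mk ℝ v h ∈ Ω} := by
    convert isOpen_ne.isOpenMap_subtype_val _ (hΩ.isOpen.preimage isQuotientMap_mk.continuous)
    ext v
    exact ⟨fun ⟨hv, hvΩ⟩ => ⟨⟨v, hv⟩, hvΩ, rfl⟩, by rintro ⟨u, huΩ, rfl⟩; exact ⟨u.2, huΩ⟩⟩
  convert hmk.inter (isOpen_lt continuous_const f.continuous_of_finiteDimensional) using 1
  ext v
  exact ⟨fun ⟨hv, hfv, hvΩ⟩ => ⟨⟨hv, hvΩ⟩, hfv⟩, fun ⟨⟨hv, hvΩ⟩, hfv⟩ => ⟨hv, hfv, hvΩ⟩⟩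

lemma smul_mem_pcone {c : ℝ} (hc : 0 < c) {v : Vd d} (hv : v ∈ pcone f Ω) :
    c • v ∈ pcone f Ω := by
  obtain ⟨hv, hfv, hvΩ⟩ := hv
  refine ⟨smul_ne_zero hc.ne' hv, by rw [map_smul, smul_eq_mul]; positivity, ?_⟩
  convert hvΩ using 1
  exact (Projectivization.mk_eq_mk_iff' ℝ _ _ _ _).2 ⟨c, rfl⟩

lemma add_mem_pcone (hΩ : IsPCDomain f Ω) {v w : Vd d} (hv : v ∈ pcone f Ω)
    (hw : w ∈ pcone f Ω) : v + w ∈ pcone f Ω := by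
  rw [mem_pcone_iff hΩ] at hv hw ⊢
  obtain ⟨hfv, hv⟩ := hv
  obtain ⟨hfw, hw⟩ := hw
  have hsum : 0 < f (v + w) := by rw [map_add]; positivity
  refine ⟨hsum, ?_⟩
  convert hΩ.pc.convex hv hw (div_pos hfv hsum).le (div_pos hfw hsum).le
    (by rw [← add_div, ← map_add, div_self hsum.ne']) using 1
  rw [smul_add, smul_smul, smul_smul]
  congr 2 <;> field_simp

variable (f Ω) in
def IsPCDomain.cone (hΩ : IsPCDomain f Ω) : ConvexCone ℝ (Vd d) where
  carrier := pcone f Ω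
  smul_mem' _ hc _ hv := smul_mem_pcone hc hv
  add_mem' _ hv _ hw := add_mem_pcone hΩ hv hw

lemma zero_mem_closure_pcone (hΩ : IsPCDomain f Ω) : (0 : Vd d) ∈ closure (pcone f Ω) := by
  obtain ⟨v, hv⟩ := pcone_nonempty hΩ
  have hlim : Tendsto (fun t : ℝ => t • v) (𝓝[>] 0) (𝓝 0) := by
    simpa using ((tendsto_id (x := 𝓝 (0 : ℝ))).mono_left nhdsWithin_le_nhds).smul_const v
  exact mem_closure_of_tendsto hlim
    (eventually_nhdsWithin_of_forall fun _ ht => smul_mem_pcone ht hv)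

def IsPCDomain.closedCone (hΩ : IsPCDomain f Ω) : PointedCone ℝ (Vd d) :=
  (hΩ.cone f Ω).closure.toPointedCone (zero_mem_closure_pcone hΩ)

end Cone

section ClosedCone

variable {f : Vd d →ₗ[ℝ] ℝ} {Ω : Set (Proj d)}

lemma closure_pchart_image_subset_closedCone (hΩ : IsPCDomain f Ω) :
    closure (pchart f '' Ω) ⊆ hΩ.closedCone :=
  closure_mono (pchart_image_subset_pcone hΩ)

lemma pchart_mem_closedCone (hΩ : IsPCDomain f Ω) {x : Proj d} (hx : x ∈ closure Ω) :
    pchart f x ∈ hΩ.closedCone :=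
  closure_pchart_image_subset_closedCone hΩ
    (pchart_mem_closure_image f hx (hΩ.pc.chartOK x hx))

lemma map_nonneg_of_mem_closedCone (hΩ : IsPCDomain f Ω) {v : Vd d}
    (hv : v ∈ hΩ.closedCone) : 0 ≤ f v :=
  closure_minimal (fun _ hw => hw.2.1.le)
    (isClosed_le continuous_const f.continuous_of_finiteDimensional) hv

lemma mem_closure_pchart_image_of_mem_closedCone (hΩ : IsPCDomain f Ω) {v : Vd d}
    (hv : v ∈ hΩ.closedCone) (hfv : f v = 1) : v ∈ closure (pchart f '' Ω) := by
  have hcont : ContinuousAt (fun w => (f w)⁻¹ • w) v :=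
    (f.continuous_of_finiteDimensional.continuousAt.inv₀ (by simp [hfv])).smul continuousAt_id
  have hmem := mem_closure_image hcont hv
  rw [hfv, inv_one, one_smul] at hmem
  refine closure_mono ?_ hmem
  rintro _ ⟨w, hw, rfl⟩
  exact ((mem_pcone_iff hΩ).1 hw).2

lemma add_mem_pcone_of_mem_closedCone (hΩ : IsPCDomain f Ω) {x v : Vd d}
    (hx : x ∈ pcone f Ω) (hv : v ∈ hΩ.closedCone) : x + v ∈ pcone f Ω := by
  have hint := (isOpen_pcone hΩ).interior_eq
  have hmid : (1 / 2 : ℝ) • v + (1 / 2 : ℝ) • x ∈ pcone f Ω := by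
    rw [← hint]
    exact (hΩ.cone f Ω).convex.combo_closure_interior_mem_interior hv (hint ▸ hx)
      (by norm_num) (by norm_num) (by norm_num)
  convert smul_mem_pcone two_pos hmid using 1
  module

lemma mem_pcone_of_smul_sub_mem_closedCone (hΩ : IsPCDomain f Ω) {x y : Vd d} {l : ℝ}
    (hx : x ∈ pcone f Ω) (hl : 0 < l) (h : l • y - x ∈ hΩ.closedCone) : y ∈ pcone f Ω := by
  have := smul_mem_pcone (inv_pos.2 hl) (add_mem_pcone_of_mem_closedCone hΩ hx h)
  rwa [add_sub_cancel, inv_smul_smul₀ hl.ne'] at this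

/-- Otherwise the bounded chart image of `Ω` would contain a ray. -/
lemma eq_zero_of_mem_closedCone_of_map_eq_zero (hΩ : IsPCDomain f Ω) {v : Vd d}
    (hv : v ∈ hΩ.closedCone) (hfv : f v = 0) : v = 0 := by
  obtain ⟨x, hxΩ⟩ := hΩ.nonempty
  have hx : f (pchart f x) = 1 := map_pchart f (hΩ.pc.chartOK x (subset_closure hxΩ))
  by_contra hv0
  have hne : pchart f x ≠ pchart f x + v := by simpa [eq_comm] using hv0
  refine not_bddAbove_Ici (0 : ℝ)
    ((isBounded_segSet hΩ.pc.bounded hne).bddAbove.mono fun t ht => ?_)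
  have hmem : pchart f x + t • v ∈ pcone f Ω :=
    add_mem_pcone_of_mem_closedCone hΩ (pchart_image_subset_pcone hΩ ⟨x, hxΩ, rfl⟩)
      (hΩ.closedCone.smul_mem ht hv)
  have hf : f (pchart f x + t • v) = 1 := by simp [hx, hfv]
  show pchart f x + t • (pchart f x + v - pchart f x) ∈ closure (pchart f '' Ω)
  rw [add_sub_cancel_left]
  exact subset_closure (by simpa [hf] using ((mem_pcone_iff hΩ).1 hmem).2)

lemma one_le_of_smul_sub_mem_closedCone (hΩ : IsPCDomain f Ω) {x y : Vd d} {l : ℝ}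
    (hx : f x = 1) (hy : f y = 1) (h : l • y - x ∈ hΩ.closedCone) : 1 ≤ l := by
  have := map_nonneg_of_mem_closedCone hΩ h
  rw [map_sub, map_smul, hx, hy, smul_eq_mul, mul_one] at this
  linarith

lemma one_lt_of_smul_sub_mem_closedCone (hΩ : IsPCDomain f Ω) {x y : Vd d} {l : ℝ}
    (hx : f x = 1) (hy : f y = 1) (hxy : x ≠ y) (h : l • y - x ∈ hΩ.closedCone) : 1 < l := by
  refine (one_le_of_smul_sub_mem_closedCone hΩ hx hy h).lt_of_ne ?_
  rintro rfl
  rw [one_smul] at h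
  exact hxy (sub_eq_zero.1 (eq_zero_of_mem_closedCone_of_map_eq_zero hΩ h (by simp [hx, hy]))).symm

/-- The chord through `x` and `y` meets the closure at the parameters `l / (l - 1)` and
`-1 / (m - 1)`, whose cross ratio is `l m`. -/
theorem affHilbertDist_le_of_smul_sub_mem_closedCone (hΩ : IsPCDomain f Ω) {x y : Vd d}
    {l m : ℝ} (hx : f x = 1) (hy : f y = 1) (h : l • y - x ∈ hΩ.closedCone)
    (h' : m • x - y ∈ hΩ.closedCone) :
    affHilbertDist (pchart f '' Ω) x y ≤ 1 / 2 * Real.log (l * m) := by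
  rcases eq_or_ne x y with rfl | hxy
  · rw [affHilbertDist, if_pos rfl]
    exact mul_nonneg (by norm_num) (Real.log_nonneg (one_le_mul_of_one_le_of_one_le
      (one_le_of_smul_sub_mem_closedCone hΩ hx hx h)
      (one_le_of_smul_sub_mem_closedCone hΩ hx hx h')))
  have hl := one_lt_of_smul_sub_mem_closedCone hΩ hx hy hxy h
  have hm := one_lt_of_smul_sub_mem_closedCone hΩ hy hx hxy.symm h'
  have hseg : ∀ {t : ℝ} {v : Vd d}, v ∈ hΩ.closedCone → v = x + t • (y - x) →
      t ∈ segSet (pchart f '' Ω) x y := by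
    rintro t v hv rfl
    exact mem_closure_pchart_image_of_mem_closedCone hΩ hv (by simp [hx, hy])
  have hl1 : (l - 1) * (l - 1)⁻¹ = 1 := mul_inv_cancel₀ (sub_pos.2 hl).ne'
  have hm1 : (m - 1) * (m - 1)⁻¹ = 1 := mul_inv_cancel₀ (sub_pos.2 hm).ne'
  rw [← crossRatio_div_sub_one l m hl.ne' hm.ne']
  refine affHilbertDist_le hΩ.pc.bounded
    (hseg (hΩ.closedCone.smul_mem (inv_nonneg.2 (sub_pos.2 hl).le) h) ?_) ?_
    (hseg (hΩ.closedCone.smul_mem (inv_nonneg.2 (sub_pos.2 hm).le) h') ?_) ?_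
  · linear_combination (norm := module) hl1 • x
  · rw [lt_div_iff₀ (sub_pos.2 hl)]; linarith
  · linear_combination (norm := module) hm1 • x
  · exact div_neg_of_neg_of_pos (by norm_num) (sub_pos.2 hm)

end ClosedCone

lemma exists_one_lt_add_smul_sub_mem_openSegment {E : Type*} [AddCommGroup E] [Module ℝ E]
    {a b x y : E} (hx : x ∈ openSegment ℝ a b) (hy : y ∈ openSegment ℝ a b) :
    ∃ s : ℝ, 1 < s ∧ x + s • (y - x) ∈ openSegment ℝ a b := by
  rw [openSegment_eq_image'] at hx hy ⊢
  obtain ⟨α, -, rfl⟩ := hx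
  obtain ⟨β, hβ, rfl⟩ := hy
  have hnear : ∀ᶠ s in 𝓝 (1 : ℝ), α + s * (β - α) ∈ Ioo (0 : ℝ) 1 :=
    (Continuous.tendsto (by fun_prop) 1).eventually (isOpen_Ioo.mem_nhds (by simpa using hβ))
  obtain ⟨s, hs, hs1⟩ :=
    ((hnear.filter_mono (nhdsWithin_le_nhds (s := Ioi 1))).and self_mem_nhdsWithin).exists
  exact ⟨s, hs1, _, hs, by module⟩

section Face

variable {f : Vd d →ₗ[ℝ] ℝ} {Ω : Set (Proj d)}

lemma pface_subset_closure {C : Set (Proj d)} {p : Proj d} (hp : p ∈ closure C) :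
    pface f C p ⊆ closure C :=
  insert_subset hp fun _ hy => hy.1

lemma map_eq_one_of_mem_closure_pchart_image (hΩ : IsPCDomain f Ω) {w : Vd d}
    (hw : w ∈ closure (pchart f '' Ω)) : f w = 1 :=
  closure_minimal (t := {w | f w = 1})
    (image_subset_iff.2 fun x hx => map_pchart f (hΩ.pc.chartOK x (subset_closure hx)))
    (isClosed_eq f.continuous_of_finiteDimensional continuous_const) hw

lemma closure_pchart_image_pface_subset (hΩ : IsPCDomain f Ω) {p : Proj d}
    (hp : p ∈ closure Ω) : closure (pchart f '' pface f Ω p) ⊆ closure (pchart f '' Ω) :=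
  closure_minimal (image_subset_iff.2 fun y hy => pchart_mem_closure_image f
    (pface_subset_closure hp hy) (hΩ.pc.chartOK y (pface_subset_closure hp hy))) isClosed_closure

lemma mk_mem_closure_of_mem_closure_pchart_image (hΩ : IsPCDomain f Ω) {w : Vd d}
    (hw : w ∈ closure (pchart f '' Ω)) (hw0 : w ≠ 0) :
    Projectivization.mk ℝ w hw0 ∈ closure Ω := by
  set S : Set {v : Vd d // v ≠ 0} := {u | (u : Vd d) ∈ pchart f '' Ω}
  have hS : (⟨w, hw0⟩ : {v : Vd d // v ≠ 0}) ∈ closure S := by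
    refine closure_subtype.2 (closure_mono ?_ hw)
    rintro _ ⟨x, hx, rfl⟩
    exact ⟨⟨pchart f x, ne_zero_of_map (by
      rw [map_pchart f (hΩ.pc.chartOK x (subset_closure hx))]; exact one_ne_zero)⟩,
      ⟨x, hx, rfl⟩, rfl⟩
  refine closure_mono ?_ (mem_closure_image isQuotientMap_mk.continuous.continuousAt hS)
  rintro _ ⟨⟨_, hu⟩, ⟨x, hx, rfl⟩, rfl⟩
  change Projectivization.mk ℝ (pchart f x) hu ∈ Ω
  rwa [mk_pchart f (hΩ.pc.chartOK x (subset_closure hx))]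

lemma mem_pchart_image_pface (hΩ : IsPCDomain f Ω) {p : Proj d}
    {a b w : Vd d} (hab : openSegment ℝ a b ⊆ closure (pchart f '' Ω))
    (hpab : pchart f p ∈ openSegment ℝ a b) (hw : w ∈ openSegment ℝ a b) :
    w ∈ pchart f '' pface f Ω p := by
  have hwK := hab hw
  have hfw := map_eq_one_of_mem_closure_pchart_image hΩ hwK
  have hw0 : w ≠ 0 := ne_zero_of_map (by rw [hfw]; exact one_ne_zero)
  have hchart := pchart_mk_of_map_eq_one f hw0 hfw
  refine ⟨Projectivization.mk ℝ w hw0,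
    Or.inr ⟨mk_mem_closure_of_mem_closure_pchart_image hΩ hwK hw0, ?_⟩, hchart⟩
  rw [hchart]
  exact Or.inr ⟨hwK, a, b, hab, hpab, hw⟩

theorem exists_smul_sub_mem_closedCone_half_log_lt_pfaceDist (hΩ : IsPCDomain f Ω)
    {p q : Proj d} (hp : p ∈ closure Ω) (hq : q ∈ pface f Ω p) {D : ℝ}
    (hD : pfaceDist f Ω p p q < D) :
    ∃ l m : ℝ, l • pchart f q - pchart f p ∈ hΩ.closedCone ∧
      m • pchart f p - pchart f q ∈ hΩ.closedCone ∧ 1 / 2 * Real.log (l * m) < D := by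
  set P := pchart f p
  set Q := pchart f q
  rcases eq_or_ne P Q with hPQ | hPQ
  · refine ⟨1, 1, ?_, ?_, ?_⟩
    · rw [hPQ, one_smul, sub_self]; exact zero_mem _
    · rw [hPQ, one_smul, sub_self]; exact zero_mem _
    · rwa [pfaceDist, affHilbertDist, if_pos hPQ, mul_one, Real.log_one, mul_zero] at *
  obtain ⟨a, b, hab, hPab, hQab⟩ : ∃ a b, openSegment ℝ a b ⊆ closure (pchart f '' Ω) ∧
      P ∈ openSegment ℝ a b ∧ Q ∈ openSegment ℝ a b := by
    rcases hq with rfl | ⟨-, h | ⟨-, h⟩⟩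
    · exact absurd rfl hPQ
    · exact absurd h.symm hPQ
    · exact h
  have hseg : ∀ t, P + t • (Q - P) ∈ openSegment ℝ a b →
      t ∈ segSet (pchart f '' pface f Ω p) P Q :=
    fun t ht => subset_closure (mem_pchart_image_pface hΩ hab hPab ht)
  have hcone : ∀ {t}, t ∈ segSet (pchart f '' pface f Ω p) P Q →
      P + t • (Q - P) ∈ hΩ.closedCone :=
    fun ht => closure_pchart_image_subset_closedCone hΩ (closure_pchart_image_pface_subset hΩ hp ht)
  have hbdd : Bornology.IsBounded (pchart f '' pface f Ω p) :=
    hΩ.pc.bounded.closure.subset (subset_closure.trans (closure_pchart_image_pface_subset hΩ hp))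
  obtain ⟨s₀, hs₀1, hs₀⟩ := exists_one_lt_add_smul_sub_mem_openSegment hPab hQab
  obtain ⟨r₀, hr₀1, hr₀⟩ := exists_one_lt_add_smul_sub_mem_openSegment hQab hPab
  obtain ⟨s, hs, hs1, r, hr, hr0, hlt⟩ := exists_half_log_crossRatio_lt hbdd hPQ
    (hseg s₀ hs₀) hs₀1 (hseg (1 - r₀) (by convert hr₀ using 1; module)) (by linarith) hD
  have hs1' : (s - 1) * (s - 1)⁻¹ = 1 := mul_inv_cancel₀ (sub_pos.2 hs1).ne'
  have hr0' : (-r) * (-r)⁻¹ = 1 := mul_inv_cancel₀ (neg_pos.2 hr0).ne'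
  refine ⟨s / (s - 1), (1 - r) / (-r), ?_, ?_, by rwa [← crossRatio_eq_mul]⟩
  · convert hΩ.closedCone.smul_mem (inv_nonneg.2 (sub_pos.2 hs1).le) (hcone hs) using 1
    linear_combination (norm := module) hs1' • P
  · convert hΩ.closedCone.smul_mem (inv_nonneg.2 (neg_pos.2 hr0).le) (hcone hr) using 1
    linear_combination (norm := module) hr0' • Q

end Face

section Segment

variable {f : Vd d →ₗ[ℝ] ℝ} {Ω : Set (Proj d)}

lemma exists_mem_pcseg_hdist_lt (hΩ : IsPCDomain f Ω) {p₁ p₂ q₁ q₂ : Proj d}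
    (hp₁ : p₁ ∈ closure Ω) (hp₂ : p₂ ∈ closure Ω) (hq₁ : q₁ ∈ closure Ω) (hq₂ : q₂ ∈ closure Ω)
    {l₁ m₁ l₂ m₂ D : ℝ}
    (h₁ : l₁ • pchart f q₁ - pchart f p₁ ∈ hΩ.closedCone)
    (h₁' : m₁ • pchart f p₁ - pchart f q₁ ∈ hΩ.closedCone)
    (h₂ : l₂ • pchart f q₂ - pchart f p₂ ∈ hΩ.closedCone)
    (h₂' : m₂ • pchart f p₂ - pchart f q₂ ∈ hΩ.closedCone)
    (hD₁ : 1 / 2 * Real.log (l₁ * m₁) < D) (hD₂ : 1 / 2 * Real.log (l₂ * m₂) < D)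
    {z : Proj d} (hz : z ∈ pcseg f p₁ p₂ ∩ Ω) :
    ∃ z' ∈ pcseg f q₁ q₂ ∩ Ω, hdist f Ω z z' < D ∧ hdist f Ω z' z < D := by
  obtain ⟨⟨x, hx, hx0, rfl⟩, hzΩ⟩ := hz
  have hf : ∀ {p}, p ∈ closure Ω → f (pchart f p) = 1 :=
    fun hp => map_pchart f (hΩ.pc.chartOK _ hp)
  have hfx : f x = 1 := (convex_hyperplane f.isLinear 1).segment_subset (hf hp₁) (hf hp₂) hx
  have hxC : x ∈ pcone f Ω := ⟨hx0, hfx ▸ one_pos, hzΩ⟩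
  have hpos : ∀ {p q : Proj d} {l : ℝ}, p ∈ closure Ω → q ∈ closure Ω →
      l • pchart f q - pchart f p ∈ hΩ.closedCone → 0 < l := fun hp hq h =>
    one_pos.trans_le (one_le_of_smul_sub_mem_closedCone hΩ (hf hp) (hf hq) h)
  obtain ⟨y, hy, l, m, h, h', hlm⟩ := hΩ.closedCone.exists_mem_segment_smul_sub_mem
    (hpos hp₁ hq₁ h₁) (hpos hq₁ hp₁ h₁') (hpos hp₂ hq₂ h₂) (hpos hq₂ hp₂ h₂')
    (pchart_mem_closedCone hΩ hp₁) (pchart_mem_closedCone hΩ hp₂)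
    (pchart_mem_closedCone hΩ hq₁) (pchart_mem_closedCone hΩ hq₂) h₁ h₁' h₂ h₂' hx
  have hfy : f y = 1 := (convex_hyperplane f.isLinear 1).segment_subset (hf hq₁) (hf hq₂) hy
  obtain ⟨hy0, -, hyΩ⟩ := mem_pcone_of_smul_sub_mem_closedCone hΩ hxC
    (one_pos.trans_le (one_le_of_smul_sub_mem_closedCone hΩ hfx hfy h)) h
  have hD : 1 / 2 * Real.log (l * m) < D := by
    rw [hlm]
    rcases max_choice (l₁ * m₁) (l₂ * m₂) with hmax | hmax <;> rwa [hmax]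
  refine ⟨Projectivization.mk ℝ y hy0, ⟨⟨y, hy, hy0, rfl⟩, hyΩ⟩, ?_, ?_⟩ <;>
    rw [hdist, pchart_mk_of_map_eq_one f hx0 hfx, pchart_mk_of_map_eq_one f hy0 hfy]
  · exact (affHilbertDist_le_of_smul_sub_mem_closedCone hΩ hfx hfy h h').trans_lt hD
  · rw [mul_comm l m] at hD
    exact (affHilbertDist_le_of_smul_sub_mem_closedCone hΩ hfy hfx h' h).trans_lt hD

end Segment

theorem stmt_3_general {d : ℕ} (f : Vd d →ₗ[ℝ] ℝ) (Ω : Set (Proj d)) (hΩ : IsPCDomain f Ω)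
    (p₁ p₂ q₁ q₂ : Proj d)
    (hp₁ : p₁ ∈ closure Ω) (hp₂ : p₂ ∈ closure Ω)
    (hq₁ : q₁ ∈ closure Ω) (hq₂ : q₂ ∈ closure Ω)
    (hf₁ : pface f Ω p₁ = pface f Ω q₁) (hf₂ : pface f Ω p₂ = pface f Ω q₂) :
    HausdorffLE (hdist f Ω) (pcseg f p₁ p₂ ∩ Ω) (pcseg f q₁ q₂ ∩ Ω)
      (max (pfaceDist f Ω p₁ p₁ q₁) (pfaceDist f Ω p₂ p₂ q₂)) := by
  have hface₁ : q₁ ∈ pface f Ω p₁ := hf₁ ▸ mem_insert q₁ _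
  have hface₂ : q₂ ∈ pface f Ω p₂ := hf₂ ▸ mem_insert q₂ _
  constructor <;> intro z hz ε hε <;>
  obtain ⟨l₁, m₁, h₁, h₁', hD₁⟩ := exists_smul_sub_mem_closedCone_half_log_lt_pfaceDist hΩ hp₁
    hface₁ (lt_add_of_le_of_pos (le_max_left _ (pfaceDist f Ω p₂ p₂ q₂)) hε) <;>
  obtain ⟨l₂, m₂, h₂, h₂', hD₂⟩ := exists_smul_sub_mem_closedCone_half_log_lt_pfaceDist hΩ hp₂
    hface₂ (lt_add_of_le_of_pos (le_max_right (pfaceDist f Ω p₁ p₁ q₁) _) hε)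
  · obtain ⟨z', hz', hzz', -⟩ :=
      exists_mem_pcseg_hdist_lt hΩ hp₁ hp₂ hq₁ hq₂ h₁ h₁' h₂ h₂' hD₁ hD₂ hz
    exact ⟨z', hz', hzz'⟩
  · rw [mul_comm l₁] at hD₁
    rw [mul_comm l₂] at hD₂
    obtain ⟨z', hz', -, hzz'⟩ :=
      exists_mem_pcseg_hdist_lt hΩ hq₁ hq₂ hp₁ hp₂ h₁' h₁ h₂' h₂ hD₁ hD₂ hz
    exact ⟨z', hz', hzz'⟩

/-- Hausdorff distance bound between `[p₁,p₂] ∩ Ω` and `[q₁,q₂] ∩ Ω`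
when `(p₁,p₂) ⊆ Ω`, `F_Ω(p₁) = F_Ω(q₁)` and `F_Ω(p₂) = F_Ω(q₂)`. -/
theorem stmt_3 {d : ℕ} (f : Vd d →ₗ[ℝ] ℝ) (Ω : Set (Proj d)) (hΩ : IsPCDomain f Ω)
    (p₁ p₂ q₁ q₂ : Proj d)
    (hp₁ : p₁ ∈ closure Ω) (hp₂ : p₂ ∈ closure Ω)
    (hq₁ : q₁ ∈ closure Ω) (hq₂ : q₂ ∈ closure Ω)
    (hseg : poseg f p₁ p₂ ⊆ Ω)
    (hf₁ : pface f Ω p₁ = pface f Ω q₁) (hf₂ : pface f Ω p₂ = pface f Ω q₂) :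
    HausdorffLE (hdist f Ω) (pcseg f p₁ p₂ ∩ Ω) (pcseg f q₁ q₂ ∩ Ω)
      (max (pfaceDist f Ω p₁ p₁ q₁) (pfaceDist f Ω p₂ p₂ q₂)) :=
  stmt_3_general f Ω hΩ p₁ p₂ q₁ q₂ hp₁ hp₂ hq₁ hq₂ hf₁ hf₂
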